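/- A binary symmetric tensor A of odd order d = 2s+1 is completely positive if and only if H_3(y) ⪰ 0 and H_4(y) ⪰ 0, where y is the moment sequence associated with L_T(A) for T = [[1,1],[0,1]]. -/

import Mathlib

/-!
For a cp-decomposition with vectors `(a_i, b_i)`, the moments are
`y_k = ∑ᵢ (a_i + b_i)^(d-k) b_i^k`, so `H₃(y)` and `H₄(y)` are sums of rank-one matrices
`b_i • u uᵀ` and `a_i • u uᵀ` with `u = ((a_i + b_i)^(s-j) b_i^j)_j`.

Conversely, `H₃(y) ⪰ 0` and `H₄(y) ⪰ 0` say that the Riesz functional `L(f) = ∑ f_k y_k` is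
nonnegative on `X p²` and `(1 - X) p²` for `deg p ≤ s`. Splitting off real roots and pairs of
conjugate complex roots, every polynomial of degree `≤ 2s+1` that is nonnegative on `[0,1]` is a
sum of products `X^i (1-X)^j p²` of degree `≤ 2s+1` (Lukács), and on these `L` is nonnegative.
Separating `y` from the compact convex hull of the moment curve `t ↦ (t^k)_k`, `t ∈ [0,1]`, then
gives `y_k = ∑ᵢ w_i t_i^k` with `w_i ≥ 0`. Finally `w_i^(1/d) (1 - t_i, t_i)` is a
cp-decomposition of `A`: `L_T` is invertible, and symmetric tensors are determined by their
entries at the indices `(2,…,2,1,…,1)`, which for `L_T(A)` are the moments.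
-/

open Matrix MeasureTheory Set

noncomputable section

/-- The `d`-th symmetric tensor power `v^{⊗ d}` of a vector `v ∈ ℝ²`,
viewed as the array of entries indexed by `Fin d → Fin 2`. -/
def tpow (d : ℕ) (v : Fin 2 → ℝ) : (Fin d → Fin 2) → ℝ :=
  fun idx => ∏ k, v (idx k)

/-- A binary tensor is symmetric if its entries are invariant under index permutations. -/
def IsSymTensor (d : ℕ) (A : (Fin d → Fin 2) → ℝ) : Prop :=
  ∀ (σ : Equiv.Perm (Fin d)) (idx : Fin d → Fin 2), A (idx ∘ σ) = A idx

/-- A binary tensor is completely positive (CP) if it is a finite sum of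
`d`-th tensor powers of nonnegative vectors in `ℝ²`. -/
def IsCP (d : ℕ) (A : (Fin d → Fin 2) → ℝ) : Prop :=
  ∃ (r : ℕ) (v : Fin r → Fin 2 → ℝ),
    (∀ i j, 0 ≤ v i j) ∧ A = ∑ i, tpow d (v i)

/-- The cp-rank: the minimal length of a cp-decomposition. -/
def cpRank (d : ℕ) (A : (Fin d → Fin 2) → ℝ) : ℕ :=
  sInf {r | ∃ v : Fin r → Fin 2 → ℝ,
    (∀ i j, 0 ≤ v i j) ∧ A = ∑ i, tpow d (v i)}

/-- The matrix `T = [[1,1],[0,1]]`. -/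
def matT : Matrix (Fin 2) (Fin 2) ℝ := !![1, 1; 0, 1]

/-- The linear map `L_T` on binary tensors induced by a matrix `T`
(multilinear matrix multiplication by `T` in each mode);
it sends `u^{⊗ d}` to `(T u)^{⊗ d}`. -/
def Lmul (d : ℕ) (T : Matrix (Fin 2) (Fin 2) ℝ)
    (A : (Fin d → Fin 2) → ℝ) : (Fin d → Fin 2) → ℝ :=
  fun idx => ∑ j : Fin d → Fin 2, (∏ k, T (idx k) (j k)) * A j

/-- The truncated moment sequence `y` associated to a binary tensor `A`:
`y k` is the entry of `L_T (A)` whose index has exactly `k` components equal to `2`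
(here encoded as `1 : Fin 2`). -/
def momSeq (d : ℕ) (A : (Fin d → Fin 2) → ℝ) : ℕ → ℝ :=
  fun k => Lmul d matT A (fun i => if (i : ℕ) < k then 1 else 0)

/-- The Hankel moment matrix `H₁(y) = (y_{i+j})_{0 ≤ i,j ≤ s}`. -/
def H1 (s : ℕ) (y : ℕ → ℝ) : Matrix (Fin (s + 1)) (Fin (s + 1)) ℝ :=
  fun i j => y ((i : ℕ) + (j : ℕ))

/-- The localizing Hankel matrix `H₂(y) = (y_{i+j+1} - y_{i+j+2})_{0 ≤ i,j ≤ s-1}`. -/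
def H2 (s : ℕ) (y : ℕ → ℝ) : Matrix (Fin s) (Fin s) ℝ :=
  fun i j => y ((i : ℕ) + (j : ℕ) + 1) - y ((i : ℕ) + (j : ℕ) + 2)

/-- The localizing Hankel matrix `H₃(y) = (y_{i+j+1})_{0 ≤ i,j ≤ s}`. -/
def H3 (s : ℕ) (y : ℕ → ℝ) : Matrix (Fin (s + 1)) (Fin (s + 1)) ℝ :=
  fun i j => y ((i : ℕ) + (j : ℕ) + 1)

/-- The localizing Hankel matrix `H₄(y) = (y_{i+j} - y_{i+j+1})_{0 ≤ i,j ≤ s}`. -/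
def H4 (s : ℕ) (y : ℕ → ℝ) : Matrix (Fin (s + 1)) (Fin (s + 1)) ℝ :=
  fun i j => y ((i : ℕ) + (j : ℕ)) - y ((i : ℕ) + (j : ℕ) + 1)

open Polynomial Finset

def canonIdx (d k : ℕ) : Fin d → Fin 2 := fun i => if (i : ℕ) < k then 1 else 0

lemma momSeq_eq_Lmul_canonIdx (d : ℕ) (A : (Fin d → Fin 2) → ℝ) (k : ℕ) :
    momSeq d A k = Lmul d matT A (canonIdx d k) := rfl

lemma card_filter_eq_zero {d : ℕ} (idx : Fin d → Fin 2) :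
    #{i | idx i = 0} = d - #{i | idx i = 1} := by
  have h : ∀ a : Fin 2, a = 0 ↔ ¬ a = 1 := by decide
  simp_rw [h]
  have := card_filter_add_card_filter_not (s := univ) (fun i => idx i = 1)
  simp only [card_univ, Fintype.card_fin] at this
  omega

lemma exists_perm_comp_eq_canonIdx {d : ℕ} (idx : Fin d → Fin 2) :
    ∃ σ : Equiv.Perm (Fin d), idx ∘ σ = canonIdx d #{i | idx i = 1} := by
  set k := #{i | idx i = 1}
  have hk : #{i | canonIdx d k i = 1} = k := by
    have : k ≤ d := (card_filter_le _ _).trans (by simp)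
    simp [canonIdx, Fin.card_filter_val_lt, this]
  have hfiber (c : Fin 2) :
      Fintype.card {i // canonIdx d k i = c} = Fintype.card {i // idx i = c} := by
    simp only [Fintype.card_subtype]
    fin_cases c
    · simp only [Fin.zero_eta, card_filter_eq_zero, hk]; rfl
    · exact hk
  exact ⟨Equiv.ofFiberEquiv fun c => Fintype.equivOfCardEq (hfiber c),
    funext fun i => Equiv.ofFiberEquiv_map _ i⟩

lemma IsSymTensor.ext {d : ℕ} {A B : (Fin d → Fin 2) → ℝ} (hA : IsSymTensor d A)
    (hB : IsSymTensor d B) (h : ∀ k ≤ d, A (canonIdx d k) = B (canonIdx d k)) : A = B := by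
  funext idx
  obtain ⟨σ, hσ⟩ := exists_perm_comp_eq_canonIdx idx
  rw [← hA σ, ← hB σ, hσ, h _ ((card_filter_le _ _).trans (by simp))]

lemma isSymTensor_tpow (d : ℕ) (v : Fin 2 → ℝ) : IsSymTensor d (tpow d v) :=
  fun σ idx => Equiv.prod_comp σ (fun k => v (idx k))

lemma IsSymTensor.sum {d r : ℕ} {A : Fin r → (Fin d → Fin 2) → ℝ}
    (hA : ∀ i, IsSymTensor d (A i)) : IsSymTensor d (∑ i, A i) := by
  intro σ idx
  simp only [Finset.sum_apply, hA _ σ idx]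

lemma IsSymTensor.lmul {d : ℕ} (T : Matrix (Fin 2) (Fin 2) ℝ) {A : (Fin d → Fin 2) → ℝ}
    (hA : IsSymTensor d A) : IsSymTensor d (Lmul d T A) := by
  intro σ idx
  rw [Lmul, ← (σ.arrowCongr (Equiv.refl (Fin 2))).symm.sum_comp]
  refine sum_congr rfl fun j _ => ?_
  have hj : (σ.arrowCongr (Equiv.refl (Fin 2))).symm j = j ∘ σ := rfl
  rw [hj, hA σ j, ← Equiv.prod_comp σ (fun k => T (idx k) (j k))]
  rfl

lemma Lmul_sum {d r : ℕ} (T : Matrix (Fin 2) (Fin 2) ℝ) (A : Fin r → (Fin d → Fin 2) → ℝ) :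
    Lmul d T (∑ i, A i) = ∑ i, Lmul d T (A i) := by
  funext idx
  simp only [Lmul, Finset.sum_apply, mul_sum]
  exact sum_comm

lemma Lmul_tpow {d : ℕ} (T : Matrix (Fin 2) (Fin 2) ℝ) (v : Fin 2 → ℝ) :
    Lmul d T (tpow d v) = tpow d (T *ᵥ v) := by
  funext idx
  simp only [Lmul, tpow, mulVec, dotProduct, Fintype.prod_sum, prod_mul_distrib]

lemma Lmul_Lmul {d : ℕ} (T U : Matrix (Fin 2) (Fin 2) ℝ) (A : (Fin d → Fin 2) → ℝ) :
    Lmul d T (Lmul d U A) = Lmul d (T * U) A := by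
  funext idx
  simp only [Lmul, mul_apply, Fintype.prod_sum, mul_sum, sum_mul, prod_mul_distrib, mul_assoc]
  exact sum_comm

lemma Lmul_one {d : ℕ} (A : (Fin d → Fin 2) → ℝ) : Lmul d 1 A = A := by
  funext idx
  simp [Lmul, one_apply, prod_ite_zero, ← funext_iff]

lemma Lmul_matT_injective (d : ℕ) : Function.Injective (Lmul d matT) := by
  have hinv : !![1, -1; 0, 1] * matT = 1 := by
    ext i j; fin_cases i <;> fin_cases j <;> simp [matT]
  intro A B h
  simpa [Lmul_Lmul, hinv, Lmul_one] using congrArg (Lmul d !![1, -1; 0, 1]) h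

lemma tpow_canonIdx {d k : ℕ} (hk : k ≤ d) (w : Fin 2 → ℝ) :
    tpow d w (canonIdx d k) = w 1 ^ k * w 0 ^ (d - k) := by
  simp only [tpow, canonIdx, apply_ite w, prod_ite, prod_const, filter_not,
    Fin.card_filter_val_lt, min_eq_right hk]
  rw [card_sdiff_of_subset (filter_subset _ _), Fin.card_filter_val_lt, min_eq_right hk]
  simp

lemma momSeq_sum_tpow {d r k : ℕ} (hk : k ≤ d) (v : Fin r → Fin 2 → ℝ) :
    momSeq d (∑ i, tpow d (v i)) k = ∑ i, (v i 0 + v i 1) ^ (d - k) * v i 1 ^ k := by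
  rw [momSeq_eq_Lmul_canonIdx, Lmul_sum, Finset.sum_apply]
  refine sum_congr rfl fun i _ => ?_
  rw [Lmul_tpow, tpow_canonIdx hk]
  simp [matT, mulVec, dotProduct, mul_comm]

lemma H3_eq_H1 (s : ℕ) (y : ℕ → ℝ) : H3 s y = H1 s (fun k => y (k + 1)) := rfl

lemma H4_eq_H1 (s : ℕ) (y : ℕ → ℝ) : H4 s y = H1 s (fun k => y k - y (k + 1)) := rfl

def powVec (s : ℕ) (c b : ℝ) : Fin (s + 1) → ℝ := fun a => c ^ (s - (a : ℕ)) * b ^ (a : ℕ)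

lemma posSemidef_H1_of_eq_sum {s r : ℕ} (w c b : Fin r → ℝ) (hw : ∀ i, 0 ≤ w i) {z : ℕ → ℝ}
    (hz : ∀ k ≤ 2 * s, z k = ∑ i, w i * (c i ^ (2 * s - k) * b i ^ k)) : (H1 s z).PosSemidef := by
  have hH : H1 s z = ∑ i, w i • vecMulVec (powVec s (c i) (b i)) (powVec s (c i) (b i)) := by
    ext a a'
    rw [H1, hz _ (by omega), Matrix.sum_apply]
    refine sum_congr rfl fun i _ => ?_
    rw [Matrix.smul_apply, vecMulVec_apply, powVec, powVec, smul_eq_mul,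
      show 2 * s - (a + a' : ℕ) = (s - a) + (s - a') by omega]
    ring
  rw [hH]
  refine posSemidef_sum _ fun i _ => (PosSemidef.smul ?_ (hw i))
  simpa using posSemidef_vecMulVec_self_star (powVec s (c i) (b i))

lemma IsCP.posSemidef_H3 {s : ℕ} {A : (Fin (2 * s + 1) → Fin 2) → ℝ}
    (hA : IsCP (2 * s + 1) A) :
    (H3 s (momSeq (2 * s + 1) A)).PosSemidef := by
  obtain ⟨r, v, hv, rfl⟩ := hA
  rw [H3_eq_H1]
  refine posSemidef_H1_of_eq_sum (fun i => v i 1) (fun i => v i 0 + v i 1) (fun i => v i 1)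
    (fun i => hv i 1) fun k hk => ?_
  rw [momSeq_sum_tpow (by omega), show 2 * s + 1 - (k + 1) = 2 * s - k by omega]
  simp only [pow_succ]
  exact sum_congr rfl fun i _ => by ring

lemma IsCP.posSemidef_H4 {s : ℕ} {A : (Fin (2 * s + 1) → Fin 2) → ℝ}
    (hA : IsCP (2 * s + 1) A) :
    (H4 s (momSeq (2 * s + 1) A)).PosSemidef := by
  obtain ⟨r, v, hv, rfl⟩ := hA
  rw [H4_eq_H1]
  refine posSemidef_H1_of_eq_sum (fun i => v i 0) (fun i => v i 0 + v i 1) (fun i => v i 1)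
    (fun i => hv i 0) fun k hk => ?_
  rw [momSeq_sum_tpow (by omega), momSeq_sum_tpow (by omega), ← sum_sub_distrib,
    show 2 * s + 1 - k = 2 * s - k + 1 by omega, show 2 * s + 1 - (k + 1) = 2 * s - k by omega]
  simp only [pow_succ]
  exact sum_congr rfl fun i _ => by ring

def truncPreordering (n : ℕ) : AddSubmonoid ℝ[X] :=
  AddSubmonoid.closure
    {f | ∃ (i j : ℕ) (p : ℝ[X]), i + j + 2 * p.natDegree ≤ n ∧ f = X ^ i * (1 - X) ^ j * p ^ 2}

lemma X_pow_mul_one_sub_X_pow_mul_sq_mem {n i j : ℕ} {p : ℝ[X]}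
    (h : i + j + 2 * p.natDegree ≤ n) :
    X ^ i * (1 - X) ^ j * p ^ 2 ∈ truncPreordering n :=
  AddSubmonoid.subset_closure ⟨i, j, p, h, rfl⟩

lemma truncPreordering_mono {m n : ℕ} (h : m ≤ n) : truncPreordering m ≤ truncPreordering n :=
  AddSubmonoid.closure_mono fun _ ⟨i, j, p, hp, hf⟩ => ⟨i, j, p, hp.trans h, hf⟩

lemma mul_mem_truncPreordering {m n : ℕ} {f g : ℝ[X]} (hf : f ∈ truncPreordering m)
    (hg : g ∈ truncPreordering n) : f * g ∈ truncPreordering (m + n) := by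
  have hmul := AddSubmonoid.mul_mem_mul hf hg
  rw [truncPreordering, truncPreordering, AddSubmonoid.closure_mul_closure] at hmul
  refine AddSubmonoid.closure_mono ?_ hmul
  rintro _ ⟨_, ⟨i, j, p, hp, rfl⟩, _, ⟨i', j', q, hq, rfl⟩, rfl⟩
  refine ⟨i + i', j + j', p * q, ?_, by ring⟩
  have := natDegree_mul_le (p := p) (q := q)
  omega

lemma C_mem_truncPreordering (n : ℕ) {c : ℝ} (hc : 0 ≤ c) : C c ∈ truncPreordering n := by
  have h := X_pow_mul_one_sub_X_pow_mul_sq_mem (n := n) (i := 0) (j := 0) (p := C √c) (by simp)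
  rwa [← C_pow, Real.sq_sqrt hc, pow_zero, pow_zero, one_mul, one_mul] at h

lemma X_sub_C_mem_truncPreordering {r : ℝ} (hr : r ≤ 0) : X - C r ∈ truncPreordering 1 := by
  have hX := X_pow_mul_one_sub_X_pow_mul_sq_mem (n := 1) (i := 1) (j := 0) (p := 1) (by simp)
  rw [show X - C r = X ^ 1 * (1 - X) ^ 0 * 1 ^ 2 + C (-r) by simp [sub_eq_add_neg]]
  exact add_mem hX (C_mem_truncPreordering 1 (by linarith))

lemma C_sub_X_mem_truncPreordering {r : ℝ} (hr : 1 ≤ r) : C r - X ∈ truncPreordering 1 := by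
  have hX := X_pow_mul_one_sub_X_pow_mul_sq_mem (n := 1) (i := 0) (j := 1) (p := 1) (by simp)
  rw [show C r - X = X ^ 0 * (1 - X) ^ 1 * 1 ^ 2 + C (r - 1) by simp]
  exact add_mem hX (C_mem_truncPreordering 1 (by linarith))

lemma sq_add_C_mem_truncPreordering (a : ℝ) {b : ℝ} (hb : 0 ≤ b) :
    (X - C a) ^ 2 + C b ∈ truncPreordering 2 := by
  have hsq := X_pow_mul_one_sub_X_pow_mul_sq_mem (n := 2) (i := 0) (j := 0) (p := X - C a) (by simp)
  rw [pow_zero, pow_zero, one_mul, one_mul] at hsq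
  exact add_mem hsq (C_mem_truncPreordering 2 hb)

lemma eval_nonneg_of_eval_mul_nonneg {q g : ℝ[X]} {r : ℝ}
    (hf : ∀ t ∈ Icc (0 : ℝ) 1, 0 ≤ (q * g).eval t)
    (hq : ∀ t ∈ Icc (0 : ℝ) 1, t ≠ r → 0 < q.eval t) : ∀ t ∈ Icc (0 : ℝ) 1, 0 ≤ g.eval t := by
  have hdense : Icc (0 : ℝ) 1 ⊆ closure (Ioo 0 1 ∩ {r}ᶜ) := by
    rw [← closure_Ioo zero_ne_one]
    exact closure_minimal ((dense_compl_singleton r).open_subset_closure_inter isOpen_Ioo)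
      isClosed_closure
  refine fun t ht => closure_minimal ?_ (isClosed_le continuous_const g.continuous) (hdense ht)
  rintro u ⟨hu, hur⟩
  have hqu := hq u (Ioo_subset_Icc_self hu) hur
  have hfu := hf u (Ioo_subset_Icc_self hu)
  rw [eval_mul] at hfu
  exact (mul_nonneg_iff_of_pos_left hqu).mp hfu

lemma sq_X_sub_C_dvd_of_nonneg {f : ℝ[X]} (hf0 : f ≠ 0)
    (hf : ∀ t ∈ Icc (0 : ℝ) 1, 0 ≤ f.eval t) {r : ℝ} (hr : r ∈ Set.Ioo 0 1) (hroot : f.IsRoot r) :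
    (X - C r) ^ 2 ∣ f := by
  have hmin : IsLocalMin (fun t => f.eval t) r :=
    Filter.mem_of_superset (Icc_mem_nhds hr.1 hr.2) fun t ht => by
      simpa [hroot.eq_zero] using hf t ht
  have hder : f.derivative.IsRoot r := by
    rw [IsRoot, ← Polynomial.deriv]
    exact hmin.deriv_eq_zero
  exact (le_rootMultiplicity_iff hf0).mp
    ((one_lt_rootMultiplicity_iff_isRoot hf0).mpr ⟨hroot, hder⟩)

lemma natDegree_X_sub_C_sq_add_C (a b : ℝ) : ((X - C a) ^ 2 + C b).natDegree = 2 := by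
  rw [natDegree_add_C, natDegree_pow, natDegree_X_sub_C]

lemma exists_sq_add_C_dvd_of_forall_not_isRoot {f : ℝ[X]} (hdeg : 0 < f.natDegree)
    (hreal : ∀ r, ¬ f.IsRoot r) : ∃ a b : ℝ, 0 < b ∧ (X - C a) ^ 2 + C b ∣ f := by
  obtain ⟨z, hz⟩ := IsAlgClosed.exists_aeval_eq_zero ℂ f (natDegree_pos_iff_degree_pos.mp hdeg).ne'
  have him : z.im ≠ 0 := by
    intro him
    refine hreal z.re ?_
    have hzre : z = algebraMap ℝ ℂ z.re := Complex.ext (by simp) (by simp [him])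
    rw [hzre, aeval_algebraMap_apply_eq_algebraMap_eval] at hz
    exact (algebraMap ℝ ℂ).injective (hz.trans (map_zero _).symm)
  have hq : X ^ 2 - C (2 * z.re) * X + C (‖z‖ ^ 2) = (X - C z.re) ^ 2 + C (z.im ^ 2) := by
    rw [Complex.sq_norm, Complex.normSq_apply]
    simp only [C_add, C_mul, C_ofNat, C_pow]
    ring
  exact ⟨z.re, z.im ^ 2, by positivity, hq ▸ quadratic_dvd_of_aeval_eq_zero_im_ne_zero f hz him⟩

lemma exists_dvd_mem_truncPreordering {f : ℝ[X]} (hf : ∀ t ∈ Icc (0 : ℝ) 1, 0 ≤ f.eval t)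
    (hdeg : 0 < f.natDegree) :
    ∃ q : ℝ[X], q ∣ f ∧ 0 < q.natDegree ∧ q ∈ truncPreordering q.natDegree ∧
      ∃ r, ∀ t ∈ Icc (0 : ℝ) 1, t ≠ r → 0 < q.eval t := by
  have hf0 : f ≠ 0 := by rintro rfl; simp at hdeg
  by_cases hreal : ∃ r, f.IsRoot r
  · obtain ⟨r, hr⟩ := hreal
    have hdvd : X - C r ∣ f := dvd_iff_isRoot.mpr hr
    rcases le_or_gt r 0 with hr0 | hr0
    · refine ⟨X - C r, hdvd, by simp, by simpa using X_sub_C_mem_truncPreordering hr0, r,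
        fun t ht htr => ?_⟩
      simpa using lt_of_le_of_ne (hr0.trans ht.1) (Ne.symm htr)
    rcases le_or_gt 1 r with hr1 | hr1
    · have hneg : C r - X = -(X - C r) := by ring
      have hdeg1 : (C r - X).natDegree = 1 := by rw [hneg, natDegree_neg, natDegree_X_sub_C]
      refine ⟨C r - X, by rwa [hneg, neg_dvd], by simp [hdeg1], ?_, r, fun t ht htr => ?_⟩
      · rw [hdeg1]
        exact C_sub_X_mem_truncPreordering hr1
      · simpa using lt_of_le_of_ne (ht.2.trans hr1) htr
    · refine ⟨(X - C r) ^ 2, sq_X_sub_C_dvd_of_nonneg hf0 hf ⟨hr0, hr1⟩ hr, by simp, ?_, r,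
        fun t _ htr => ?_⟩
      · simpa using sq_add_C_mem_truncPreordering r le_rfl
      · have := sub_ne_zero.mpr htr
        simp only [eval_pow, eval_sub, eval_X, eval_C]
        positivity
  · obtain ⟨a, b, hb, hdvd⟩ := exists_sq_add_C_dvd_of_forall_not_isRoot hdeg (not_exists.mp hreal)
    refine ⟨(X - C a) ^ 2 + C b, hdvd, by simp, ?_, 0,
      fun t _ _ => ?_⟩
    · rw [natDegree_X_sub_C_sq_add_C]
      exact sq_add_C_mem_truncPreordering a hb.le
    · simp only [eval_add, eval_pow, eval_sub, eval_X, eval_C]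
      positivity

theorem mem_truncPreordering_of_nonneg {f : ℝ[X]} (hf : ∀ t ∈ Icc (0 : ℝ) 1, 0 ≤ f.eval t) :
    f ∈ truncPreordering f.natDegree := by
  induction hn : f.natDegree using Nat.strong_induction_on generalizing f with
  | _ n ih =>
  rcases Nat.eq_zero_or_pos n with rfl | hpos
  · rw [eq_C_of_natDegree_eq_zero hn]
    exact C_mem_truncPreordering 0 (by simpa [coeff_zero_eq_eval_zero] using hf 0 (by simp))
  · obtain ⟨q, ⟨g, rfl⟩, hq, hqP, r, hqpos⟩ := exists_dvd_mem_truncPreordering hf (hn ▸ hpos)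
    have hg0 : g ≠ 0 := by rintro rfl; simp at hn; omega
    have hq0 : q ≠ 0 := by rintro rfl; simp at hq
    rw [natDegree_mul hq0 hg0] at hn
    rw [← hn]
    exact mul_mem_truncPreordering hqP
      (ih _ (by omega) (eval_nonneg_of_eval_mul_nonneg hf hqpos) rfl)

def riesz (y : ℕ → ℝ) : ℝ[X] →ₗ[ℝ] ℝ := lsum fun k => y k • LinearMap.id

def RieszPositive (m : ℕ) (y : ℕ → ℝ) : Prop :=
  ∀ f : ℝ[X], f.natDegree ≤ m → (∀ t ∈ Icc (0 : ℝ) 1, 0 ≤ f.eval t) → 0 ≤ riesz y f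

lemma riesz_monomial (y : ℕ → ℝ) (n : ℕ) (c : ℝ) : riesz y (monomial n c) = y n * c := by
  simp [riesz, sum_monomial_index]

lemma riesz_C (y : ℕ → ℝ) (c : ℝ) : riesz y (C c) = y 0 * c := by
  rw [← monomial_zero_left, riesz_monomial]

lemma riesz_X_pow (y : ℕ → ℝ) (k : ℕ) : riesz y (X ^ k) = y k := by
  rw [← monomial_one_right_eq_X_pow, riesz_monomial, mul_one]

lemma riesz_X_mul (y : ℕ → ℝ) (p : ℝ[X]) : riesz y (X * p) = riesz (fun k => y (k + 1)) p := by
  induction p using Polynomial.induction_on' with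
  | add p q hp hq => rw [mul_add, map_add, map_add, hp, hq]
  | monomial n c =>
    rw [← monomial_one_one_eq_X, monomial_mul_monomial, riesz_monomial, riesz_monomial, one_mul,
      add_comm]

lemma riesz_one_sub_X_mul (y : ℕ → ℝ) (p : ℝ[X]) :
    riesz y ((1 - X) * p) = riesz (fun k => y k - y (k + 1)) p := by
  induction p using Polynomial.induction_on' with
  | add p q hp hq => rw [mul_add, map_add, map_add, hp, hq]
  | monomial n c =>
    rw [sub_mul, one_mul, map_sub, ← monomial_one_one_eq_X, monomial_mul_monomial, riesz_monomial,
      riesz_monomial, riesz_monomial, one_mul, add_comm, sub_mul]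

lemma riesz_sq_nonneg {s : ℕ} {y : ℕ → ℝ} (h : (H1 s y).PosSemidef) {p : ℝ[X]}
    (hp : p.natDegree ≤ s) : 0 ≤ riesz y (p ^ 2) := by
  set x : Fin (s + 1) → ℝ := fun a => p.coeff a
  have hpx : p = ∑ a : Fin (s + 1), monomial a (x a) := by
    rw [Fin.sum_univ_eq_sum_range (fun a => monomial a (p.coeff a))]
    exact as_sum_range' p (s + 1) (by omega)
  have hquad : riesz y (p ^ 2) = x ⬝ᵥ (H1 s y *ᵥ x) := by
    rw [hpx, sq, sum_mul_sum]
    simp only [map_sum, monomial_mul_monomial, riesz_monomial, dotProduct, mulVec, H1, mul_sum]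
    exact sum_congr rfl fun a _ => sum_congr rfl fun b _ => by ring
  simpa [hquad] using h.dotProduct_mulVec_nonneg x

lemma natDegree_X_mul_le {R : Type*} [Semiring R] (p : R[X]) :
    (X * p).natDegree ≤ p.natDegree + 1 := by
  rw [add_comm]; exact natDegree_mul_le_of_le natDegree_X_le le_rfl

lemma natDegree_one_sub_X_mul_le {R : Type*} [Ring R] (p : R[X]) :
    ((1 - X) * p).natDegree ≤ p.natDegree + 1 := by
  rw [add_comm]
  exact natDegree_mul_le_of_le ((natDegree_sub_le _ _).trans (by simpa using natDegree_X_le))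
    le_rfl

section
variable {s : ℕ} {y : ℕ → ℝ}

lemma riesz_X_mul_sq_nonneg (h3 : (H3 s y).PosSemidef) {p : ℝ[X]} (hp : p.natDegree ≤ s) :
    0 ≤ riesz y (X * p ^ 2) := by
  rw [riesz_X_mul]
  exact riesz_sq_nonneg (H3_eq_H1 s y ▸ h3) hp

lemma riesz_one_sub_X_mul_sq_nonneg (h4 : (H4 s y).PosSemidef) {p : ℝ[X]}
    (hp : p.natDegree ≤ s) : 0 ≤ riesz y ((1 - X) * p ^ 2) := by
  rw [riesz_one_sub_X_mul]
  exact riesz_sq_nonneg (H4_eq_H1 s y ▸ h4) hp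

theorem riesz_X_pow_mul_one_sub_X_pow_mul_sq_nonneg (h3 : (H3 s y).PosSemidef)
    (h4 : (H4 s y).PosSemidef) :
    ∀ (i j : ℕ) (p : ℝ[X]), i + j + 2 * p.natDegree ≤ 2 * s + 1 →
      0 ≤ riesz y (X ^ i * (1 - X) ^ j * p ^ 2)
  | i + 2, j, p, h => by
    rw [show X ^ (i + 2) * (1 - X) ^ j * p ^ 2 = X ^ i * (1 - X) ^ j * (X * p) ^ 2 by ring]
    exact riesz_X_pow_mul_one_sub_X_pow_mul_sq_nonneg h3 h4 i j _
      (by have := natDegree_X_mul_le p; omega)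
  | i, j + 2, p, h => by
    rw [show X ^ i * (1 - X) ^ (j + 2) * p ^ 2 = X ^ i * (1 - X) ^ j * ((1 - X) * p) ^ 2 by ring]
    exact riesz_X_pow_mul_one_sub_X_pow_mul_sq_nonneg h3 h4 i j _
      (by have := natDegree_one_sub_X_mul_le p; omega)
  | 0, 0, p, h => by
    rw [show X ^ 0 * (1 - X) ^ 0 * p ^ 2 = X * p ^ 2 + (1 - X) * p ^ 2 by ring, map_add]
    exact add_nonneg (riesz_X_mul_sq_nonneg h3 (by omega))
      (riesz_one_sub_X_mul_sq_nonneg h4 (by omega))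
  | 1, 0, p, h => by
    simpa using riesz_X_mul_sq_nonneg h3 (p := p) (by omega)
  | 0, 1, p, h => by
    simpa using riesz_one_sub_X_mul_sq_nonneg h4 (p := p) (by omega)
  | 1, 1, p, h => by
    rw [show X ^ 1 * (1 - X) ^ 1 * p ^ 2 = X * ((1 - X) * p) ^ 2 + (1 - X) * (X * p) ^ 2 by ring,
      map_add]
    exact add_nonneg
      (riesz_X_mul_sq_nonneg h3 (by have := natDegree_one_sub_X_mul_le p; omega))
      (riesz_one_sub_X_mul_sq_nonneg h4 (by have := natDegree_X_mul_le p; omega))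
termination_by i j => i + j

theorem riesz_nonneg_of_mem_truncPreordering (h3 : (H3 s y).PosSemidef)
    (h4 : (H4 s y).PosSemidef) {f : ℝ[X]} (hf : f ∈ truncPreordering (2 * s + 1)) :
    0 ≤ riesz y f := by
  induction hf using AddSubmonoid.closure_induction with
  | mem f hf =>
    obtain ⟨i, j, p, h, rfl⟩ := hf
    exact riesz_X_pow_mul_one_sub_X_pow_mul_sq_nonneg h3 h4 i j p h
  | zero => simp
  | add f g _ _ hf hg => rw [map_add]; exact add_nonneg hf hg

theorem rieszPositive_of_posSemidef (h3 : (H3 s y).PosSemidef) (h4 : (H4 s y).PosSemidef) :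
    RieszPositive (2 * s + 1) y := fun _ hdeg hf =>
  riesz_nonneg_of_mem_truncPreordering h3 h4
    (truncPreordering_mono hdeg (mem_truncPreordering_of_nonneg hf))

end

theorem isCompact_convexHull {E : Type*} [TopologicalSpace E] [AddCommGroup E] [Module ℝ E]
    [ContinuousAdd E] [ContinuousSMul ℝ E] [FiniteDimensional ℝ E] {s : Set E}
    (hs : IsCompact s) : IsCompact (convexHull ℝ s) := by
  let comb (k : ℕ) (p : (Fin k → ℝ) × (Fin k → E)) : E := ∑ i, p.1 i • p.2 i
  have hhull : convexHull ℝ s = ⋃ k ∈ Finset.range (Module.finrank ℝ E + 2),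
      comb k '' (stdSimplex ℝ (Fin k) ×ˢ Set.univ.pi fun _ => s) := by
    refine Subset.antisymm (fun x hx => ?_) ?_
    · obtain ⟨ι, _, z, w, hzs, hind, hw, hw1, hx⟩ := eq_pos_convex_span_of_mem_convexHull hx
      have hcard : Fintype.card ι < Module.finrank ℝ E + 2 := by
        have := hind.card_le_finrank_succ
        have := Submodule.finrank_le (vectorSpan ℝ (Set.range z))
        omega
      let e := Fintype.equivFin ι
      refine Set.mem_biUnion (Finset.mem_range.mpr hcard)
        ⟨(w ∘ e.symm, z ∘ e.symm), ⟨⟨fun i => (hw _).le, ?_⟩, fun i _ => hzs ⟨_, rfl⟩⟩, ?_⟩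
      · simpa [e.symm.sum_comp w] using hw1
      · simpa [comb, e.symm.sum_comp fun i => w i • z i] using hx
    · refine Set.iUnion₂_subset fun k _ => ?_
      rintro _ ⟨⟨w, z⟩, ⟨⟨hw0, hw1⟩, hz⟩, rfl⟩
      exact (convex_convexHull ℝ s).sum_mem (fun i _ => hw0 i) hw1
        fun i _ => subset_convexHull ℝ s (hz i (Set.mem_univ i))
  rw [hhull]
  refine (Finset.range _).isCompact_biUnion fun k _ =>
    ((isCompact_stdSimplex ℝ (Fin k)).prod (isCompact_univ_pi fun _ => hs)).image ?_
  fun_prop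

def momentVec (m : ℕ) (t : ℝ) : Fin (m + 1) → ℝ := fun k => t ^ (k : ℕ)

lemma exists_poly_eq_linearMap (m : ℕ) (φ : (Fin (m + 1) → ℝ) →ₗ[ℝ] ℝ) :
    ∃ P : ℝ[X], P.natDegree ≤ m ∧ (∀ t, P.eval t = φ (momentVec m t)) ∧
      ∀ y : ℕ → ℝ, riesz y P = φ fun k => y k := by
  refine ⟨∑ k : Fin (m + 1), monomial k (φ fun j => if k = j then 1 else 0),
    natDegree_sum_le_of_forall_le _ _ fun k _ => (natDegree_monomial_le _).trans (by omega),
    fun t => ?_, fun y => ?_⟩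
  · rw [φ.pi_apply_eq_sum_univ (momentVec m t), eval_finsetSum]
    simp [momentVec, mul_comm]
  · rw [φ.pi_apply_eq_sum_univ, map_sum]
    simp [riesz_monomial]

namespace RieszPositive

variable {m : ℕ} {y : ℕ → ℝ}

lemma nonneg_zero (hy : RieszPositive m y) : 0 ≤ y 0 := by
  have := hy (C 1) (by simp) (by simp)
  rwa [riesz_C, mul_one] at this

lemma eq_zero_of_zero (hy : RieszPositive m y) (h0 : y 0 = 0) {k : ℕ} (hk : k ≤ m) :
    y k = 0 := by
  have h1 := hy (X ^ k) (by simpa using hk) fun t ht => by simpa using pow_nonneg ht.1 k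
  have h2 := hy (1 - X ^ k) ((natDegree_sub_le _ _).trans (by simpa using hk))
    fun t ht => by simpa using pow_le_one₀ ht.1 ht.2
  rw [map_sub, ← C_1, riesz_C, riesz_X_pow] at h2
  rw [riesz_X_pow] at h1
  linarith

lemma smul_mem_convexHull (hy : RieszPositive m y) (h0 : 0 < y 0) :
    (y 0)⁻¹ • (fun k : Fin (m + 1) => y k) ∈ convexHull ℝ (momentVec m '' Icc 0 1) := by
  by_contra hz
  have hK : IsClosed (convexHull ℝ (momentVec m '' Icc 0 1)) :=
    (isCompact_convexHull (isCompact_Icc.image (by unfold momentVec; fun_prop))).isClosed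
  obtain ⟨φ, u, hφz, hφK⟩ := geometric_hahn_banach_point_closed (convex_convexHull ℝ _) hK hz
  obtain ⟨P, hPdeg, hPeval, hPriesz⟩ := exists_poly_eq_linearMap m φ.toLinearMap
  have hneg := hy (P - C u) ((natDegree_sub_le _ _).trans (by simpa using hPdeg)) fun t ht => by
    rw [eval_sub, eval_C, hPeval]
    exact (sub_pos.mpr (hφK _ (subset_convexHull ℝ _ ⟨t, ht, rfl⟩))).le
  rw [map_sub, hPriesz, riesz_C] at hneg
  change 0 ≤ φ (fun k => y k) - _ at hneg
  rw [map_smul, smul_eq_mul, inv_mul_lt_iff₀ h0] at hφz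
  linarith

theorem exists_moment_rep (hy : RieszPositive m y) :
    ∃ (N : ℕ) (w t : Fin N → ℝ), (∀ i, 0 ≤ w i) ∧ (∀ i, t i ∈ Icc (0 : ℝ) 1) ∧
      ∀ k ≤ m, y k = ∑ i, w i * t i ^ k := by
  rcases hy.nonneg_zero.eq_or_lt with h0 | h0
  · exact ⟨0, ![], ![], by simp, by simp, fun k hk => by simpa using hy.eq_zero_of_zero h0.symm hk⟩
  obtain ⟨ι, _, w, z, hw0, hw1, hzK, hsum⟩ :=
    mem_convexHull_iff_exists_fintype.mp (hy.smul_mem_convexHull h0)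
  choose t ht hzt using hzK
  let e := Fintype.equivFin ι
  refine ⟨Fintype.card ι, fun i => y 0 * w (e.symm i), fun i => t (e.symm i),
    fun i => mul_nonneg h0.le (hw0 _), fun i => ht _, fun k hk => ?_⟩
  have hk' := congrFun hsum ⟨k, by omega⟩
  simp only [Finset.sum_apply, Pi.smul_apply, ← hzt, momentVec, smul_eq_mul] at hk'
  rw [e.symm.sum_comp fun i => y 0 * w i * t i ^ k]
  simp only [mul_assoc, ← mul_sum, hk', mul_inv_cancel_left₀ h0.ne']

end RieszPositive

theorem IsSymTensor.isCP_of_momSeq_eq {d N : ℕ} (hd : d ≠ 0) {A : (Fin d → Fin 2) → ℝ}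
    (hA : IsSymTensor d A) {w t : Fin N → ℝ} (hw : ∀ i, 0 ≤ w i) (ht : ∀ i, t i ∈ Icc (0 : ℝ) 1)
    (hy : ∀ k ≤ d, momSeq d A k = ∑ i, w i * t i ^ k) : IsCP d A := by
  set α : Fin N → ℝ := fun i => w i ^ ((d : ℝ)⁻¹)
  have hα (i : Fin N) : α i ^ d = w i := Real.rpow_inv_natCast_pow (hw i) hd
  let v : Fin N → Fin 2 → ℝ := fun i => ![α i * (1 - t i), α i * t i]
  refine ⟨N, v, fun i j => ?_, Lmul_matT_injective d ?_⟩
  · have := Real.rpow_nonneg (hw i) (d : ℝ)⁻¹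
    fin_cases j
    · exact mul_nonneg this (sub_nonneg.mpr (ht i).2)
    · exact mul_nonneg this (ht i).1
  refine hA.lmul matT |>.ext ((IsSymTensor.sum fun i => isSymTensor_tpow d (v i)).lmul matT)
    fun k hk => ?_
  rw [← momSeq_eq_Lmul_canonIdx, ← momSeq_eq_Lmul_canonIdx, hy k hk, momSeq_sum_tpow hk]
  refine sum_congr rfl fun i _ => ?_
  simp only [v, Matrix.cons_val_zero, Matrix.cons_val_one]
  rw [← hα i, show α i * (1 - t i) + α i * t i = α i by ring, mul_pow, ← mul_assoc, ← pow_add,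
    Nat.sub_add_cancel hk]

/-- a binary symmetric tensor of odd order `d = 2s+1` is CP iff
`H₃(y) ⪰ 0` and `H₄(y) ⪰ 0` for the associated moment sequence `y`. -/
theorem stmt9 (s : ℕ) (A : (Fin (2 * s + 1) → Fin 2) → ℝ)
    (hSym : IsSymTensor (2 * s + 1) A) :
    IsCP (2 * s + 1) A ↔
      (H3 s (momSeq (2 * s + 1) A)).PosSemidef ∧
        (H4 s (momSeq (2 * s + 1) A)).PosSemidef := by
  refine ⟨fun hA => ⟨hA.posSemidef_H3, hA.posSemidef_H4⟩, fun ⟨h3, h4⟩ => ?_⟩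
  obtain ⟨N, w, t, hw, ht, hy⟩ := (rieszPositive_of_posSemidef h3 h4).exists_moment_rep
  exact hSym.isCP_of_momSeq_eq (by omega) hw ht hy
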